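/- For every n ≥ 2 and every p with 2 ≤ p < ∞ there exist constants c, C > 0, depending only on n and p, such that for every integer k ≥ 1 one has c k^{((n−1)/2)(1/2 − 1/p)} ≤ ( ∫_{Sⁿ} (x₁² + x₂²)^{pk/2} dσ )^{1/p} / ( ∫_{Sⁿ} (x₁² + x₂²)^k dσ )^{1/2} ≤ C k^{((n−1)/2)(1/2 − 1/p)}. -/

import Mathlib

open MeasureTheory Real

noncomputable section

/-- `ℝ^{n+1}` as a Euclidean space. -/
abbrev Esp (n : ℕ) := EuclideanSpace ℝ (Fin (n + 1))

/-- The unit sphere `Sⁿ ⊂ ℝ^{n+1}`. -/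
abbrev Sph (n : ℕ) := Metric.sphere (0 : Esp n) 1

/-- The surface measure `σ` on the unit sphere `Sⁿ`. -/
def sphMeasure (n : ℕ) : Measure (Sph n) := (volume : Measure (Esp n)).toSphere

/-- The geodesic distance `d(x,y) = arccos ⟨x,y⟩` on the sphere. -/
def gdist {n : ℕ} (x y : Sph n) : ℝ := Real.arccos (inner ℝ (x : Esp n) (y : Esp n))

/-- The geodesic ball `B_r(x) ⊂ Sⁿ`. -/
def gball {n : ℕ} (x : Sph n) (r : ℝ) : Set (Sph n) := {y | gdist x y < r}

/-- `u : Sⁿ → ℂ` is a spherical harmonic of degree `k`: the restriction to `Sⁿ` of a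
polynomial on `ℝ^{n+1}` that is homogeneous of degree `k` and harmonic. -/
def IsSphericalHarmonic {n : ℕ} (k : ℕ) (u : Sph n → ℂ) : Prop :=
  ∃ P : MvPolynomial (Fin (n + 1)) ℂ, P.IsHomogeneous k ∧
    (∑ i, MvPolynomial.pderiv i (MvPolynomial.pderiv i P)) = 0 ∧
    ∀ x : Sph n, u x = MvPolynomial.eval (fun i => ((x : Esp n) i : ℂ)) P

/-- The `L²(σ)` norm of `u` over the geodesic ball `B_r(x)`. -/
def L2g {n : ℕ} (u : Sph n → ℂ) (x : Sph n) (r : ℝ) : ℝ :=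
  Real.sqrt (∫ y in gball x r, ‖u y‖ ^ 2 ∂ sphMeasure n)

/-- The `L^p(σ)` norm of `u` on `Sⁿ`. -/
def LpS {n : ℕ} (u : Sph n → ℂ) (p : ℝ) : ℝ :=
  (∫ x, ‖u x‖ ^ p ∂ sphMeasure n) ^ (1 / p)

/-- The critical exponent `p_c = 2(n+1)/(n-1)`. -/
def pc (n : ℕ) : ℝ := 2 * ((n : ℝ) + 1) / ((n : ℝ) - 1)

/-!
Write `J(s) = ∫_{Sⁿ} (x₁² + x₂²)^s dσ` (`sphereMoment n s`). Evaluating the Gaussian integral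
`∫_{ℝ^{n+1}} (x₁² + x₂²)^s e^{-|x|²} dx` once in polar coordinates and once through the splitting
`ℝ^{n+1} = ℝ² × ℝ^{n-1}` gives `J(s) = D Γ(s + 1) / Γ(s + 1 + q)` with `q = (n - 1)/2`.
Log-convexity of `Γ` gives `Γ(x + q) ≍ x^q Γ(x)`, hence `J(s) ≍ s^{-q}` for `s ≥ 1`, and the ratio
`‖Q_k‖_p / ‖Q_k‖_2 = J(pk/2)^{1/p} / J(k)^{1/2}` is `≍ k^{q/2 - q/p}`.
-/

open Set Metric Module

namespace Real

lemma log_Gamma_add_one_sub_log_Gamma {y : ℝ} (hy : 0 < y) :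
    log (Gamma (y + 1)) - log (Gamma y) = log y := by
  rw [Gamma_add_one hy.ne', log_mul hy.ne' (Gamma_pos_of_pos hy).ne', add_sub_cancel_right]

theorem Gamma_add_le_rpow_mul_Gamma {x q : ℝ} (hx : 0 < x) (hq : 0 ≤ q) :
    Gamma (x + q) ≤ (x + q) ^ q * Gamma x := by
  rcases hq.eq_or_lt with rfl | hq
  · simp
  have hxq : 0 < x + q := by linarith
  have slope := convexOn_log_Gamma.slope_mono_adjacent (mem_Ioi.2 hx)
    (mem_Ioi.2 (by linarith : 0 < x + q + 1)) (by linarith : x < x + q) (by linarith)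
  simp only [Function.comp_apply, add_sub_cancel_left, div_one,
    log_Gamma_add_one_sub_log_Gamma hxq, div_le_iff₀ hq] at slope
  have hG := Gamma_pos_of_pos hx
  rw [← log_le_log_iff (Gamma_pos_of_pos hxq) (by positivity), log_mul (by positivity) hG.ne',
    log_rpow hxq]
  linarith

theorem rpow_mul_Gamma_le_Gamma_add {x q : ℝ} (hx : 1 < x) (hq : 0 ≤ q) :
    (x - 1) ^ q * Gamma x ≤ Gamma (x + q) := by
  rcases hq.eq_or_lt with rfl | hq
  · simp
  have hx1 : 0 < x - 1 := by linarith
  have slope := convexOn_log_Gamma.slope_mono_adjacent (mem_Ioi.2 hx1)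
    (mem_Ioi.2 (by linarith : 0 < x + q)) (by linarith : x - 1 < x) (by linarith : x < x + q)
  have step := log_Gamma_add_one_sub_log_Gamma hx1
  simp only [sub_add_cancel] at step
  simp only [Function.comp_apply, sub_sub_cancel, div_one, add_sub_cancel_left, step,
    le_div_iff₀ hq] at slope
  have hG := Gamma_pos_of_pos (by linarith : 0 < x)
  rw [← log_le_log_iff (by positivity) (Gamma_pos_of_pos (by linarith)),
    log_mul (by positivity) hG.ne', log_rpow hx1]
  linarith

lemma Gamma_div_Gamma_add_mul_rpow_bounds {s q : ℝ} (hs : 1 ≤ s) (hq : 0 ≤ q) :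
    (2 + q) ^ (-q) ≤ Gamma (s + 1) / Gamma (s + 1 + q) * s ^ q ∧
      Gamma (s + 1) / Gamma (s + 1 + q) * s ^ q ≤ 1 := by
  have hG := Gamma_pos_of_pos (by linarith : 0 < s + 1)
  have hGq := Gamma_pos_of_pos (by linarith : 0 < s + 1 + q)
  rw [div_mul_eq_mul_div, le_div_iff₀ hGq, div_le_iff₀ hGq, one_mul]
  constructor
  · calc (2 + q) ^ (-q) * Gamma (s + 1 + q)
        ≤ (2 + q) ^ (-q) * ((s + 1 + q) ^ q * Gamma (s + 1)) := by
          gcongr; exact Gamma_add_le_rpow_mul_Gamma (by linarith) hq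
      _ ≤ (2 + q) ^ (-q) * (((2 + q) * s) ^ q * Gamma (s + 1)) := by
          gcongr; nlinarith
      _ = Gamma (s + 1) * s ^ q := by
          rw [mul_rpow (by linarith) (by linarith), rpow_neg (by linarith)]
          field_simp
  · simpa [mul_comm] using rpow_mul_Gamma_le_Gamma_add (by linarith : 1 < s + 1) hq

end Real

section Polar

variable {E : Type*} [NormedAddCommGroup E] [NormedSpace ℝ E] [FiniteDimensional ℝ E]
  [Nontrivial E] [MeasurableSpace E] [BorelSpace E] (μ : Measure E) [μ.IsAddHaarMeasure]

theorem integral_mul_fun_norm_of_homogeneous {f : E → ℝ} {d : ℝ}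
    (hf : ∀ x : E, ∀ r : ℝ, 0 < r → f (r • x) = r ^ d * f x) (g : ℝ → ℝ) :
    ∫ x, f x * g ‖x‖ ∂μ = (∫ ω : sphere (0 : E) 1, f ω ∂μ.toSphere) *
      ∫ r in Ioi (0 : ℝ), r ^ (finrank ℝ E - 1) * (r ^ d * g r) :=
  calc
    ∫ x, f x * g ‖x‖ ∂μ = ∫ x : ({(0 : E)}ᶜ : Set E), f x * g ‖(x : E)‖ ∂(μ.comap (↑)) := by
      rw [integral_subtype_comap (measurableSet_singleton _).compl fun x ↦ f x * g ‖x‖,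
        restrict_compl_singleton]
    _ = ∫ z, f z.1 * (z.2.1 ^ d * g z.2) ∂μ.toSphere.prod (.volumeIoiPow (finrank ℝ E - 1)) := by
      rw [← μ.measurePreserving_homeomorphUnitSphereProd.integral_comp
        (Homeomorph.measurableEmbedding _)]
      refine integral_congr_ae (ae_of_all _ fun x ↦ ?_)
      have hx : 0 < ‖(x : E)‖ := norm_pos_iff.2 x.2
      simp only [homeomorphUnitSphereProd_apply_fst_coe, homeomorphUnitSphereProd_apply_snd_coe]
      rw [mul_left_comm, ← mul_assoc, ← hf _ _ hx, smul_inv_smul₀ hx.ne']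
    _ = _ := by
      rw [integral_prod_mul (fun ω : sphere (0 : E) 1 ↦ f ω) fun r : Ioi (0 : ℝ) ↦ r.1 ^ d * g r]
      congr 1
      simp only [Measure.volumeIoiPow, ENNReal.ofReal]
      rw [integral_withDensity_eq_integral_smul (measurable_subtype_coe.pow_const _).real_toNNReal,
        integral_subtype_comap measurableSet_Ioi
          fun a ↦ Real.toNNReal (a ^ (finrank ℝ E - 1)) • (a ^ d * g a)]
      refine setIntegral_congr_fun measurableSet_Ioi fun r hr ↦ ?_
      rw [NNReal.smul_def, Real.coe_toNNReal _ (pow_nonneg hr.out.le _), smul_eq_mul]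

theorem integral_mul_exp_neg_norm_sq_of_homogeneous {f : E → ℝ} {d : ℝ}
    (hd : -(finrank ℝ E : ℝ) < d) (hf : ∀ x : E, ∀ r : ℝ, 0 < r → f (r • x) = r ^ d * f x) :
    ∫ x, f x * exp (-‖x‖ ^ 2) ∂μ =
      (∫ ω : sphere (0 : E) 1, f ω ∂μ.toSphere) * (Gamma ((d + finrank ℝ E) / 2) / 2) := by
  have hdim : 1 ≤ finrank ℝ E := finrank_pos
  rw [integral_mul_fun_norm_of_homogeneous μ hf fun r ↦ exp (-r ^ 2)]
  congr 1
  have key := integral_rpow_mul_exp_neg_rpow (p := 2) (q := d + (finrank ℝ E - 1)) two_pos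
    (by linarith)
  rw [show d + (finrank ℝ E - 1) + 1 = d + finrank ℝ E by ring, one_div_mul_eq_div] at key
  rw [← key]
  refine setIntegral_congr_fun measurableSet_Ioi fun r hr ↦ ?_
  rw [rpow_add hr.out, rpow_two, ← Nat.cast_pred hdim, rpow_natCast]
  ring

end Polar

theorem LinearIsometryEquiv.integral_comp_fst_mul_comp_snd
    {E U V : Type*} [NormedAddCommGroup E] [InnerProductSpace ℝ E] [FiniteDimensional ℝ E]
    [MeasurableSpace E] [BorelSpace E]
    [NormedAddCommGroup U] [InnerProductSpace ℝ U] [FiniteDimensional ℝ U]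
    [MeasurableSpace U] [BorelSpace U]
    [NormedAddCommGroup V] [InnerProductSpace ℝ V] [FiniteDimensional ℝ V]
    [MeasurableSpace V] [BorelSpace V]
    (Φ : E ≃ₗᵢ[ℝ] WithLp 2 (U × V)) (f : U → ℝ) (g : V → ℝ) :
    ∫ x, f (Φ x).fst * g (Φ x).snd = (∫ u, f u) * ∫ v, g v := by
  calc ∫ x, f (Φ x).fst * g (Φ x).snd = ∫ w : WithLp 2 (U × V), f w.fst * g w.snd :=
        Φ.measurePreserving.integral_comp Φ.toHomeomorph.measurableEmbedding
          fun w ↦ f w.fst * g w.snd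
    _ = ∫ z : U × V, f z.1 * g z.2 :=
        (WithLp.volume_preserving_ofLp U V).integral_comp
          (MeasurableEquiv.toLp 2 (U × V)).symm.measurableEmbedding fun z ↦ f z.1 * g z.2
    _ = _ := integral_prod_mul f g

noncomputable def EuclideanSpace.prodSplit {ι κ κ' : Type*} [Fintype ι] [Fintype κ] [Fintype κ']
    (e : ι ≃ κ ⊕ κ') :
    EuclideanSpace ℝ ι ≃ₗᵢ[ℝ] WithLp 2 (EuclideanSpace ℝ κ × EuclideanSpace ℝ κ') :=
  (LinearIsometryEquiv.piLpCongrLeft 2 ℝ ℝ e).trans (PiLp.sumPiLpEquivProdLpPiLp 2 _)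

lemma EuclideanSpace.prodSplit_fst_apply {ι κ κ' : Type*} [Fintype ι] [Fintype κ] [Fintype κ']
    (e : ι ≃ κ ⊕ κ') (x : EuclideanSpace ℝ ι) (i : κ) :
    (prodSplit e x).fst i = x (e.symm (.inl i)) :=
  rfl

lemma EuclideanSpace.norm_sq_eq_prodSplit {ι κ κ' : Type*} [Fintype ι] [Fintype κ] [Fintype κ']
    (e : ι ≃ κ ⊕ κ') (x : EuclideanSpace ℝ ι) :
    ‖x‖ ^ 2 = ‖(prodSplit e x).fst‖ ^ 2 + ‖(prodSplit e x).snd‖ ^ 2 := by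
  rw [← WithLp.prod_norm_sq_eq_of_L2, LinearIsometryEquiv.norm_map]

def finSuccEquivFinTwoSum (n : ℕ) (hn : 1 ≤ n) : Fin (n + 1) ≃ Fin 2 ⊕ Fin (n - 1) :=
  (finCongr (by omega)).trans finSumFinEquiv.symm

def sphereMoment (n : ℕ) (s : ℝ) : ℝ :=
  ∫ x : Sph n, ((x : Esp n) 0 ^ 2 + (x : Esp n) 1 ^ 2) ^ s ∂sphMeasure n

lemma rpow_sq_add_sq_smul {n : ℕ} (s : ℝ) (x : EuclideanSpace ℝ (Fin (n + 1))) {r : ℝ}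
    (hr : 0 < r) : ((r • x) 0 ^ 2 + (r • x) 1 ^ 2) ^ s = r ^ (2 * s) * (x 0 ^ 2 + x 1 ^ 2) ^ s := by
  simp only [PiLp.smul_apply, smul_eq_mul]
  rw [show (r * x 0) ^ 2 + (r * x 1) ^ 2 = r ^ 2 * (x 0 ^ 2 + x 1 ^ 2) by ring,
    mul_rpow (by positivity) (by positivity), rpow_mul hr.le, rpow_two]

lemma integral_rpow_sq_add_sq_mul_exp_neg_norm_sq_eq_sphereMoment_mul {n : ℕ} (hn : 1 ≤ n)
    {s : ℝ} (hs : -1 < s) :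
    ∫ x : EuclideanSpace ℝ (Fin (n + 1)), (x 0 ^ 2 + x 1 ^ 2) ^ s * exp (-‖x‖ ^ 2) =
      sphereMoment n s * (Gamma (s + (n + 1) / 2) / 2) := by
  have hdim : (finrank ℝ (EuclideanSpace ℝ (Fin (n + 1))) : ℝ) = n + 1 := by simp
  have hd : -(n + 1 : ℝ) < 2 * s := by linarith [(Nat.one_le_cast.2 hn : (1 : ℝ) ≤ n)]
  rw [integral_mul_exp_neg_norm_sq_of_homogeneous volume (by rwa [hdim])
    fun x r hr ↦ rpow_sq_add_sq_smul s x hr, hdim, sphereMoment, sphMeasure]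
  congr 3
  ring

lemma integral_rpow_sq_add_sq_mul_exp_neg_norm_sq_fin_two {s : ℝ} (hs : -1 < s) :
    ∫ y : EuclideanSpace ℝ (Fin 2), (y 0 ^ 2 + y 1 ^ 2) ^ s * exp (-‖y‖ ^ 2) =
      (sphMeasure 1).real univ * (Gamma (s + 1) / 2) := by
  have h := integral_rpow_sq_add_sq_mul_exp_neg_norm_sq_eq_sphereMoment_mul le_rfl hs
  have hone : ∀ y : Sph 1, (y : Esp 1) 0 ^ 2 + (y : Esp 1) 1 ^ 2 = 1 := fun y ↦ by
    have hnorm := EuclideanSpace.real_norm_sq_eq (y : Esp 1)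
    rw [norm_eq_of_mem_sphere, Fin.sum_univ_two] at hnorm
    linarith
  simpa [sphereMoment, hone, one_add_one_eq_two] using h

lemma integral_rpow_sq_add_sq_mul_exp_neg_norm_sq_eq_fin_two_mul {n : ℕ} (hn : 1 ≤ n) (s : ℝ) :
    ∫ x : EuclideanSpace ℝ (Fin (n + 1)), (x 0 ^ 2 + x 1 ^ 2) ^ s * exp (-‖x‖ ^ 2) =
      (∫ y : EuclideanSpace ℝ (Fin 2), (y 0 ^ 2 + y 1 ^ 2) ^ s * exp (-‖y‖ ^ 2)) *
        π ^ ((n - 1 : ℕ) / 2 : ℝ) := by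
  set Φ := EuclideanSpace.prodSplit (finSuccEquivFinTwoSum n hn)
  have h0 : (finSuccEquivFinTwoSum n hn).symm (.inl 0) = 0 := by
    ext; simp [finSuccEquivFinTwoSum]
  have h1 : (finSuccEquivFinTwoSum n hn).symm (.inl 1) = 1 := by
    ext; simp [finSuccEquivFinTwoSum, Nat.mod_eq_of_lt (by omega : 1 < n + 1)]
  have hsplit : ∀ x : EuclideanSpace ℝ (Fin (n + 1)),
      (x 0 ^ 2 + x 1 ^ 2) ^ s * exp (-‖x‖ ^ 2) =
        ((Φ x).fst 0 ^ 2 + (Φ x).fst 1 ^ 2) ^ s * exp (-‖(Φ x).fst‖ ^ 2) *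
          exp (-‖(Φ x).snd‖ ^ 2) := fun x ↦ by
    rw [EuclideanSpace.prodSplit_fst_apply, EuclideanSpace.prodSplit_fst_apply, h0, h1,
      EuclideanSpace.norm_sq_eq_prodSplit (finSuccEquivFinTwoSum n hn) x, neg_add, exp_add,
      mul_assoc]
  simp_rw [hsplit]
  rw [LinearIsometryEquiv.integral_comp_fst_mul_comp_snd Φ
    (fun y ↦ (y 0 ^ 2 + y 1 ^ 2) ^ s * exp (-‖y‖ ^ 2)) fun z ↦ exp (-‖z‖ ^ 2)]
  have hgauss := GaussianFourier.integral_rexp_neg_mul_sq_norm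
    (V := EuclideanSpace ℝ (Fin (n - 1))) one_pos
  simp only [neg_one_mul, div_one, finrank_euclideanSpace_fin] at hgauss
  rw [hgauss]

theorem sphereMoment_eq {n : ℕ} (hn : 1 ≤ n) {s : ℝ} (hs : -1 < s) :
    sphereMoment n s =
      (sphMeasure 1).real univ * π ^ ((n - 1 : ℕ) / 2 : ℝ) *
        (Gamma (s + 1) / Gamma (s + 1 + ((n : ℝ) - 1) / 2)) := by
  have h := integral_rpow_sq_add_sq_mul_exp_neg_norm_sq_eq_sphereMoment_mul hn hs
  rw [integral_rpow_sq_add_sq_mul_exp_neg_norm_sq_eq_fin_two_mul hn,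
    integral_rpow_sq_add_sq_mul_exp_neg_norm_sq_fin_two hs] at h
  have hG : 0 < Gamma (s + 1 + ((n : ℝ) - 1) / 2) :=
    Gamma_pos_of_pos (by linarith [(Nat.one_le_cast.2 hn : (1 : ℝ) ≤ n)])
  rw [show s + (n + 1) / 2 = s + 1 + ((n : ℝ) - 1) / 2 by ring] at h
  rw [mul_div_assoc', eq_div_iff hG.ne']
  linear_combination (-2) * h

theorem sphereMoment_mul_rpow_bounds {n : ℕ} (hn : 1 ≤ n) :
    ∃ a A : ℝ, 0 < a ∧ ∀ s : ℝ, 1 ≤ s →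
      a ≤ sphereMoment n s * s ^ (((n : ℝ) - 1) / 2) ∧
        sphereMoment n s * s ^ (((n : ℝ) - 1) / 2) ≤ A := by
  set q : ℝ := ((n : ℝ) - 1) / 2
  have hq : 0 ≤ q := div_nonneg (sub_nonneg.2 (Nat.one_le_cast.2 hn)) zero_le_two
  set D := (sphMeasure 1).real univ * π ^ ((n - 1 : ℕ) / 2 : ℝ)
  have hσ : 0 < (sphMeasure 1).real univ := by
    have : NeZero (volume : Measure (Esp 1)).toSphere := ⟨Measure.toSphere_ne_zero _⟩
    rw [sphMeasure]
    exact measureReal_univ_pos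
  have hD : 0 < D := mul_pos hσ (by positivity)
  refine ⟨D * (2 + q) ^ (-q), D, by positivity, fun s hs ↦ ?_⟩
  obtain ⟨hlow, hupp⟩ := Gamma_div_Gamma_add_mul_rpow_bounds hs hq
  rw [sphereMoment_eq hn (by linarith), mul_assoc _ (Gamma (s + 1) / Gamma (s + 1 + q))]
  exact ⟨mul_le_mul_of_nonneg_left hlow hD.le, mul_le_of_le_one_right hD.le hupp⟩

lemma rpow_eq_mul_rpow_rpow_mul_rpow_neg {u s : ℝ} (hu : 0 ≤ u) (hs : 0 < s) (q r : ℝ) :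
    u ^ r = (u * s ^ q) ^ r * s ^ (-(q * r)) := by
  rw [mul_rpow hu (rpow_nonneg hs.le q), ← rpow_mul hs.le, mul_assoc, ← rpow_add hs,
    add_neg_cancel, rpow_zero, mul_one]

theorem exists_rpow_div_rpow_bounds {J : ℝ → ℝ} {a A q p : ℝ} (ha : 0 < a) (hp : 2 ≤ p)
    (hJ : ∀ s, 1 ≤ s → a ≤ J s * s ^ q ∧ J s * s ^ q ≤ A) :
    ∃ c C : ℝ, 0 < c ∧ 0 < C ∧ ∀ k : ℝ, 1 ≤ k →
      c * k ^ (q * (1 / 2 - 1 / p)) ≤ J (p * k / 2) ^ (1 / p) / J k ^ ((1 : ℝ) / 2) ∧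
        J (p * k / 2) ^ (1 / p) / J k ^ ((1 : ℝ) / 2) ≤ C * k ^ (q * (1 / 2 - 1 / p)) := by
  have hA : 0 < A := ha.trans_le ((hJ 1 le_rfl).1.trans (hJ 1 le_rfl).2)
  have hp0 : 0 < p := by linarith
  set W : ℝ := (p / 2) ^ (-(q * (1 / p)))
  refine ⟨a ^ (1 / p) / A ^ ((1 : ℝ) / 2) * W, A ^ (1 / p) / a ^ ((1 : ℝ) / 2) * W,
    by positivity, by positivity, fun k hk ↦ ?_⟩
  have hk0 : 0 < k := by linarith
  have hs : 1 ≤ p * k / 2 := by nlinarith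
  obtain ⟨hl₁, hu₁⟩ := hJ _ hs
  obtain ⟨hl₂, hu₂⟩ := hJ _ hk
  have hJ₁ : 0 ≤ J (p * k / 2) :=
    (pos_of_mul_pos_left (ha.trans_le hl₁) (rpow_nonneg (by positivity) q)).le
  have hJ₂ : 0 ≤ J k := (pos_of_mul_pos_left (ha.trans_le hl₂) (rpow_nonneg hk0.le q)).le
  set g₁ := J (p * k / 2) * (p * k / 2) ^ q
  set g₂ := J k * k ^ q
  have hnum : J (p * k / 2) ^ (1 / p) = g₁ ^ (1 / p) * (W * k ^ (-(q * (1 / p)))) := by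
    rw [rpow_eq_mul_rpow_rpow_mul_rpow_neg hJ₁ (by positivity : 0 < p * k / 2) q]
    congr 1
    rw [mul_div_right_comm, mul_rpow (by positivity) hk0.le]
  have hden : J k ^ ((1 : ℝ) / 2) = g₂ ^ ((1 : ℝ) / 2) * k ^ (-(q * (1 / 2))) :=
    rpow_eq_mul_rpow_rpow_mul_rpow_neg hJ₂ hk0 q _
  have key : J (p * k / 2) ^ (1 / p) / J k ^ ((1 : ℝ) / 2) =
      g₁ ^ (1 / p) / g₂ ^ ((1 : ℝ) / 2) * (W * k ^ (q * (1 / 2 - 1 / p))) := by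
    rw [hnum, hden, mul_div_mul_comm, mul_div_assoc, ← rpow_sub hk0]
    ring_nf
  rw [key, mul_assoc, mul_assoc]
  constructor
  · gcongr
    exact rpow_pos_of_pos (ha.trans_le hl₂) _
  · gcongr

/-- `‖Q_k‖_{L^p(σ)} / ‖Q_k‖_{L²(σ)} ≈ k^{((n-1)/2)(1/2 - 1/p)}` for the highest weight
spherical harmonic `Q_k = (x₁ + i x₂)^k`, for all `2 ≤ p < ∞` (Sections 3-4 of the paper). -/
theorem highest_weight_Lp_norm_ratio_asymptotics (n : ℕ) (hn : 2 ≤ n) (p : ℝ) (hp : 2 ≤ p) :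
    ∃ c C : ℝ, 0 < c ∧ 0 < C ∧ ∀ k : ℕ, 1 ≤ k →
      c * (k : ℝ) ^ (((n : ℝ) - 1) / 2 * (1 / 2 - 1 / p)) ≤
        (∫ x : Sph n, (((x : Esp n) 0) ^ 2 + ((x : Esp n) 1) ^ 2) ^ (p * (k : ℝ) / 2)
            ∂ sphMeasure n) ^ (1 / p) /
          (∫ x : Sph n, (((x : Esp n) 0) ^ 2 + ((x : Esp n) 1) ^ 2) ^ k
            ∂ sphMeasure n) ^ ((1 : ℝ) / 2) ∧
      (∫ x : Sph n, (((x : Esp n) 0) ^ 2 + ((x : Esp n) 1) ^ 2) ^ (p * (k : ℝ) / 2)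
            ∂ sphMeasure n) ^ (1 / p) /
          (∫ x : Sph n, (((x : Esp n) 0) ^ 2 + ((x : Esp n) 1) ^ 2) ^ k
            ∂ sphMeasure n) ^ ((1 : ℝ) / 2) ≤
        C * (k : ℝ) ^ (((n : ℝ) - 1) / 2 * (1 / 2 - 1 / p)) := by
  obtain ⟨a, A, ha, hJ⟩ := sphereMoment_mul_rpow_bounds (by omega : 1 ≤ n)
  obtain ⟨c, C, hc, hC, hratio⟩ := exists_rpow_div_rpow_bounds ha hp hJ
  refine ⟨c, C, hc, hC, fun k hk ↦ ?_⟩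
  have hk' : ∫ x : Sph n, (((x : Esp n) 0) ^ 2 + ((x : Esp n) 1) ^ 2) ^ k ∂sphMeasure n =
      sphereMoment n k := by
    simp only [sphereMoment, rpow_natCast]
  rw [hk']
  exact hratio k (Nat.one_le_cast.2 hk)
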